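/- arXiv:2106.13577 — 4 statements merged into one kernel-verified Lean document; each statement's English description precedes it below -/
import Mathlib

section
/- Let G be a finite group, H ≤ G a subgroup, and S ⊆ G a subset. Then there exists a subset S̄ ⊆ H of size at most [G:H]·|S| such that diam(H,S̄) ≤ diam(G,S). -/
open scoped ENNReal

/-- `groupDiam G S` is the diameter of `G` with respect to `S : Finset G`:
the least natural number `n` such that every element of `G` is a product of at most `n`
elements of `S` (the identity being the empty product), viewed in `ℕ∞`;
it equals `⊤` (infinity) if no such `n` exists, in particular if `S` does not generate `G`. -/
noncomputable def groupDiam (G : Type*) [Group G] (S : Finset G) : ℕ∞ :=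
  sInf {N : ℕ∞ | ∃ n : ℕ, N = (n : ℕ∞) ∧
    ∀ g : G, ∃ l : List G, l.length ≤ n ∧ (∀ x ∈ l, x ∈ S) ∧ l.prod = g}

/-!
Reidemeister–Schreier. Fix a right transversal `T` of `H` containing `1` and write every `g` as
`g = h(g) * t(g)` with `h(g) ∈ H`, `t(g) ∈ T`. Then `h(g * s) = h(g) * h(t(g) * s)`, so reading a
word `s₁ ⋯ sₙ` over `S` from left to right expresses `h(s₁ ⋯ sₙ)` as a word of the same length
in the `[G:H] * |S|` Schreier generators `h(t * s)`, and `h(g) = g` for `g ∈ H`.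
-/

theorem groupDiam_le_groupDiam {G K : Type*} [Group G] [Group K] {S : Finset G} {S' : Finset K}
    (h : ∀ k : K, ∃ g : G, ∀ l : List G, (∀ x ∈ l, x ∈ S) → l.prod = g →
      ∃ l' : List K, l'.length ≤ l.length ∧ (∀ x ∈ l', x ∈ S') ∧ l'.prod = k) :
    groupDiam K S' ≤ groupDiam G S := by
  refine sInf_le_sInf ?_
  rintro _ ⟨n, rfl, hn⟩
  refine ⟨n, rfl, fun k => ?_⟩
  obtain ⟨g, hg⟩ := h k
  obtain ⟨l, hlen, hlS, hl⟩ := hn g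
  obtain ⟨l', hlen', hl'S, hl'⟩ := hg l hlS hl
  exact ⟨l', hlen'.trans hlen, hl'S, hl'⟩

namespace Subgroup.IsComplement

variable {G : Type*} [Group G] {H : Subgroup G} {T : Set G} (hT : IsComplement H T)

theorem equiv_fst_mul (g s : G) :
    (hT.equiv (g * s)).fst = (hT.equiv g).fst * (hT.equiv ((hT.equiv g).snd * s)).fst := by
  conv_lhs => rw [← hT.equiv_fst_mul_equiv_snd g, mul_assoc, equiv_mul_left]

open scoped Classical in
noncomputable def schreierGenerators [H.FiniteIndex] (S : Finset G) : Finset H :=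
  (hT.finite_right.toFinset ×ˢ S).image fun p => (hT.equiv (p.1 * p.2)).fst

theorem card_schreierGenerators_le [H.FiniteIndex] (S : Finset G) :
    (hT.schreierGenerators S).card ≤ H.index * S.card := by
  classical
  calc (hT.schreierGenerators S).card ≤ (hT.finite_right.toFinset ×ˢ S).card :=
        Finset.card_image_le
    _ = H.index * S.card := by
        rw [Finset.card_product, ← Set.ncard_eq_toFinset_card _ hT.finite_right, hT.ncard_right]

theorem exists_schreier_word [H.FiniteIndex] {S : Finset G} (l : List G) (hl : ∀ x ∈ l, x ∈ S)
    (g : G) : ∃ m : List H, m.length = l.length ∧ (∀ x ∈ m, x ∈ hT.schreierGenerators S) ∧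
      (hT.equiv (g * l.prod)).fst = (hT.equiv g).fst * m.prod := by
  classical
  induction l generalizing g with
  | nil => exact ⟨[], rfl, by simp, by simp⟩
  | cons s l ih =>
    obtain ⟨m, hlen, hmS, hm⟩ := ih (fun x hx => hl x (List.mem_cons_of_mem s hx)) (g * s)
    refine ⟨(hT.equiv ((hT.equiv g).snd * s)).fst :: m, by simp [hlen], ?_, ?_⟩
    · simp only [List.mem_cons, forall_eq_or_imp]
      refine ⟨Finset.mem_image.mpr ⟨((hT.equiv g).snd, s), ?_, rfl⟩, hmS⟩
      simpa using hl s List.mem_cons_self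
    · rw [List.prod_cons, ← mul_assoc, hm, equiv_fst_mul, List.prod_cons, mul_assoc]

theorem groupDiam_schreierGenerators_le [H.FiniteIndex] (h1 : (1 : G) ∈ T) (S : Finset G) :
    groupDiam H (hT.schreierGenerators S) ≤ groupDiam G S := by
  refine groupDiam_le_groupDiam fun k => ⟨k, fun l hl hlk => ?_⟩
  obtain ⟨m, hlen, hmS, hm⟩ := hT.exists_schreier_word l hl 1
  refine ⟨m, hlen.le, hmS, ?_⟩
  rw [one_mul, hT.equiv_fst_eq_self_of_mem_of_one_mem h1 H.one_mem, hlk,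
    hT.equiv_fst_eq_self_of_mem_of_one_mem h1 k.2] at hm
  exact (one_mul m.prod).symm.trans hm.symm

end Subgroup.IsComplement

/-- **Lemma (Reidemeister–Schreier).**
Let `G` be a finite group, `H ≤ G` and `S ⊆ G`. Then there exists `S̄ ⊆ H` of size
at most `[G:H]·|S|` such that `diam(H,S̄) ≤ diam(G,S)`. -/
theorem stmt_5 (G : Type) [Group G] [Fintype G] (H : Subgroup G) (S : Finset G) :
    ∃ Sbar : Finset H, Sbar.card ≤ H.index * S.card ∧
      groupDiam H Sbar ≤ groupDiam G S := by
  obtain ⟨T, hT, h1⟩ := H.exists_isComplement_right 1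
  exact ⟨hT.schreierGenerators S, hT.card_schreierGenerators_le S,
    hT.groupDiam_schreierGenerators_le h1 S⟩
end

section
/- Let G be a finite group, and let H ≤ G be a subgroup of minimal order among all subgroups K ≤ G for which the order |K/[K,K]| of the abelianization is maximal (over all subgroups of G). Then H is nilpotent of class at most 2. -/
/-!
Call `G` critical if every proper subgroup has a strictly smaller abelianization; the subgroup `H`
of the statement is critical. In a critical group no proper subgroup supplements `[G,G]`, so every
maximal subgroup contains `[G,G]` and is normal; hence `G` is nilpotent and `[G,G]` contains a
nontrivial cyclic central subgroup `N`. Criticality passes to `G/N`, so by induction on `|G|` we get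
`[[G,G],G] ≤ N`. Then for each `x` the map `c ↦ [c,x]` is a homomorphism `[G,G] → N` that is
trivial on `Z(G) ∩ [G,G]`, and it determines `x` modulo `C = C_G([G,G])`. Counting homomorphisms
into a cyclic group gives `[G:C] ≤ [[G,G] : Z(G) ∩ [G,G]]`, and `[C,C] ≤ Z(G) ∩ [G,G]`, so if
`C ≠ G` then `|G| = [G:C]·|C^ab|·|[C,C]| ≤ |[G,G]|·|C^ab| < |[G,G]|·|G^ab| = |G|`.
Hence `C = G`, i.e. `[G,G]` is central.
-/

open Subgroup Function Pointwise
open scoped commutatorElement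

namespace Abelianization

variable {G H : Type*} [Group G] [Group H]

theorem of_surjective : Surjective (of : G →* Abelianization G) :=
  QuotientGroup.mk_surjective

theorem map_surjective {f : G →* H} (hf : Surjective f) : Surjective (map f) := by
  intro y
  obtain ⟨h, rfl⟩ := of_surjective y
  obtain ⟨g, rfl⟩ := hf h
  exact ⟨of g, map_of f g⟩

theorem card_le_of_surjective [Finite G] {f : G →* H} (hf : Surjective f) :
    Nat.card (Abelianization H) ≤ Nat.card (Abelianization G) :=
  Nat.card_le_card_of_surjective _ (map_surjective hf)

theorem card_le_card [Finite G] : Nat.card (Abelianization G) ≤ Nat.card G :=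
  Nat.card_le_card_of_surjective _ of_surjective

theorem card_quotient_eq [Finite G] (N : Subgroup G) [N.Normal] (hN : N ≤ commutator G) :
    Nat.card (Abelianization (G ⧸ N)) = Nat.card (Abelianization G) := by
  refine le_antisymm (card_le_of_surjective (QuotientGroup.mk'_surjective N)) ?_
  let f : G ⧸ N →* Abelianization G :=
    QuotientGroup.lift N of fun x hx => (QuotientGroup.eq_one_iff x).mpr (hN hx)
  refine Nat.card_le_card_of_surjective (lift f) fun y => ?_
  obtain ⟨x, rfl⟩ := of_surjective y
  exact ⟨of (x : G ⧸ N), rfl⟩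

theorem map_subtype_surjective {K : Subgroup G} (hK : K ⊔ commutator G = ⊤) :
    Surjective (map K.subtype) := by
  intro y
  obtain ⟨g, rfl⟩ := of_surjective y
  have hg : g ∈ (K : Set G) * (commutator G : Set G) := by
    rw [← mul_normal K (commutator G), hK]; exact mem_top g
  obtain ⟨k, hk, c, hc, rfl⟩ := hg
  refine ⟨of ⟨k, hk⟩, ?_⟩
  have hc1 : of c = 1 := (QuotientGroup.eq_one_iff c).mpr hc
  rw [map_of, map_mul, hc1, mul_one]
  rfl

end Abelianization

-- Embed `T` into `ℂˣ`; by duality, `Abelianization X` has exactly `|Abelianization X|` characters.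
theorem card_monoidHom_le_card_abelianization {X T : Type*} [Group X] [Finite X] [Group T]
    [Finite T] [IsCyclic T] : Nat.card (X →* T) ≤ Nat.card (Abelianization X) := by
  have : NeZero (Nat.card T) := ⟨Nat.card_pos.ne'⟩
  have : NeZero ((Monoid.exponent (Abelianization X) : ℕ) : ℂ) :=
    ⟨Nat.cast_ne_zero.mpr Monoid.exponent_ne_zero_of_finite⟩
  let ι : T →* ℂˣ := (rootsOfUnity (Nat.card T) ℂ).subtype.comp
    (mulEquivOfCyclicCardEq (Complex.card_rootsOfUnity _).symm).toMonoidHom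
  have hι : Injective ι := Subtype.val_injective.comp (MulEquiv.injective _)
  have : Finite (Abelianization X →* ℂˣ) := by
    refine Nat.finite_of_card_ne_zero ?_
    rw [CommGroup.card_monoidHom_of_hasEnoughRootsOfUnity]
    exact Nat.card_pos.ne'
  calc Nat.card (X →* T) ≤ Nat.card (Abelianization X →* ℂˣ) :=
        Nat.card_le_card_of_injective (fun φ => Abelianization.lift (ι.comp φ)) fun φ ψ h => by
          ext x
          exact hι (by simpa using DFunLike.congr_fun h (Abelianization.of x))
    _ = Nat.card (Abelianization X) := CommGroup.card_monoidHom_of_hasEnoughRootsOfUnity _ _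

theorem commutatorElement_mul_left_of_mem_center {G : Type*} [Group G] {a b c : G}
    (h : ⁅b, c⁆ ∈ center G) : ⁅a * b, c⁆ = ⁅a, c⁆ * ⁅b, c⁆ := by
  rw [commutatorElement_mul_left_eq_conj_mul, mem_center_iff.mp h a, mul_inv_cancel_right]
  exact (mem_center_iff.mp h _).symm

theorem Group.IsNilpotent.commutator_inf_center_ne_bot {G : Type*} [Group G] [Group.IsNilpotent G]
    (h : commutator G ≠ ⊥) : commutator G ⊓ center G ≠ ⊥ := by
  set c := Group.nilpotencyClass G
  have hc : 1 < c := by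
    by_contra! hc
    exact h ((Subgroup.lowerCentralSeries_eq_bot_iff_nilpotencyClass_le).mpr hc)
  set L := Subgroup.lowerCentralSeries (⊤ : Subgroup G) (c - 1)
  have hL : L ≠ ⊥ := by
    rw [Ne, Subgroup.lowerCentralSeries_eq_bot_iff_nilpotencyClass_le]; omega
  have hLcomm : L ≤ commutator G := Subgroup.lowerCentralSeries_antitone _ (by omega : 1 ≤ c - 1)
  have hLcenter : L ≤ center G := by
    have : ⁅L, (⊤ : Subgroup G)⁆ = ⊥ := by
      rw [← Subgroup.lowerCentralSeries_succ, Nat.sub_add_cancel hc.le,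
        Subgroup.lowerCentralSeries_nilpotencyClass]
    rwa [commutator_eq_bot_iff_le_centralizer, coe_top, centralizer_univ] at this
  exact fun h0 => hL (eq_bot_iff.mpr (h0 ▸ le_inf hLcomm hLcenter))

theorem Subgroup.normal_of_le_center {G : Type*} [Group G] {N : Subgroup G}
    (h : N ≤ center G) : N.Normal :=
  ⟨fun n hn g => by rwa [mem_center_iff.mp (h hn) g, mul_inv_cancel_right]⟩

section CommutatorPairing

variable {G : Type*} [Group G] {A N : Subgroup G}

theorem commute_of_commutatorElement_eq {a x y : G} (h : ⁅a, x⁆ = ⁅a, y⁆) :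
    Commute a (x⁻¹ * y) := by
  have hconj : x * ⁅a, x⁻¹ * y⁆ * x⁻¹ = ⁅a, x⁆⁻¹ * ⁅a, y⁆ := by group
  rw [h, inv_mul_cancel, conj_eq_one_iff] at hconj
  exact commutatorElement_eq_one_iff_commute.mp hconj

def commutatorRightHom (hN : N ≤ center G) (hAN : ∀ a ∈ A, ∀ x : G, ⁅a, x⁆ ∈ N) (x : G) :
    A →* N where
  toFun a := ⟨⁅(a : G), x⁆, hAN a a.2 x⟩
  map_one' := Subtype.ext (commutatorElement_one_left x)
  map_mul' _ b := Subtype.ext (commutatorElement_mul_left_of_mem_center (hN (hAN b b.2 x)))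

theorem index_centralizer_le_relIndex_center [Finite G] [IsCyclic N] (hN : N ≤ center G)
    (hAN : ∀ a ∈ A, ∀ x : G, ⁅a, x⁆ ∈ N) :
    (centralizer (A : Set G)).index ≤ (center G).relIndex A := by
  set Z := (center G).subgroupOf A
  let χ : G → (A ⧸ Z →* N) := fun x => QuotientGroup.lift Z (commutatorRightHom hN hAN x)
    fun a ha => Subtype.ext (commutatorElement_eq_one_iff_commute.mpr
      (mem_center_iff.mp (mem_subgroupOf.mp ha) x).symm)
  have hχ : ∀ x y, χ x = χ y → x⁻¹ * y ∈ centralizer (A : Set G) := fun x y h =>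
    mem_centralizer_iff.mpr fun a ha => by
      have hax := congrArg Subtype.val (DFunLike.congr_fun h (QuotientGroup.mk ⟨a, ha⟩))
      exact commute_of_commutatorElement_eq hax
  have : Finite (A ⧸ Z →* N) := Finite.of_injective _ DFunLike.coe_injective
  calc (centralizer (A : Set G)).index
      ≤ Nat.card (A ⧸ Z →* N) := Nat.card_le_card_of_injective (fun q => χ q.out) fun q r h => by
        rw [← QuotientGroup.out_eq' q, ← QuotientGroup.out_eq' r]
        exact QuotientGroup.eq.mpr (hχ _ _ h)
    _ ≤ Nat.card (Abelianization (A ⧸ Z)) := card_monoidHom_le_card_abelianization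
    _ ≤ Z.index := Abelianization.card_le_card

end CommutatorPairing

theorem commutatorElement_mem_of_commutator_quotient_le_center {G : Type*} [Group G]
    {N : Subgroup G} [N.Normal] (h : commutator (G ⧸ N) ≤ center (G ⧸ N)) {c : G}
    (hc : c ∈ commutator G) (x : G) : ⁅c, x⁆ ∈ N := by
  have hmap : (commutator G).map (QuotientGroup.mk' N) ≤ commutator (G ⧸ N) :=
    (map_commutator_eq G _).le.trans (commutator_mono le_top le_top)
  have hcen := h (hmap (mem_map_of_mem _ hc))
  rw [← QuotientGroup.eq_one_iff, ← QuotientGroup.mk'_apply, map_commutatorElement]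
  exact commutatorElement_eq_one_iff_commute.mpr (mem_center_iff.mp hcen _).symm

def IsAbelianizationCritical (G : Type*) [Group G] : Prop :=
  ∀ K : Subgroup G, K ≠ ⊤ → Nat.card (Abelianization K) < Nat.card (Abelianization G)

namespace IsAbelianizationCritical

variable {G : Type*} [Group G] [Finite G]

theorem eq_top_of_sup_commutator_eq_top (hG : IsAbelianizationCritical G) {K : Subgroup G}
    (hK : K ⊔ commutator G = ⊤) : K = ⊤ := by
  by_contra hne
  exact (hG K hne).not_ge
    (Nat.card_le_card_of_surjective _ (Abelianization.map_subtype_surjective hK))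

theorem isNilpotent (hG : IsAbelianizationCritical G) : Group.IsNilpotent G := by
  have hcoatom : ∀ M : Subgroup G, IsCoatom M → M.Normal := fun M hM =>
    .of_commutator_le G <| by
      by_contra h
      exact hM.1 (hG.eq_top_of_sup_commutator_eq_top (hM.2 _ (left_lt_sup.mpr h)))
  exact ((Group.isNilpotent_of_finite_tfae (G := G)).out 2 0).mp hcoatom

theorem quotient (hG : IsAbelianizationCritical G) (N : Subgroup G) [N.Normal]
    (hN : N ≤ commutator G) : IsAbelianizationCritical (G ⧸ N) := by
  intro K hK
  have hsurj := QuotientGroup.mk'_surjective N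
  rw [Abelianization.card_quotient_eq N hN]
  refine lt_of_le_of_lt (Abelianization.card_le_of_surjective
    ((QuotientGroup.mk' N).subgroupComap_surjective_of_surjective K hsurj)) (hG _ fun h => hK ?_)
  rw [← map_comap_eq_self_of_surjective hsurj K, h, map_top_of_surjective _ hsurj]

theorem centralizer_commutator_eq_top (hG : IsAbelianizationCritical G) {N : Subgroup G}
    [IsCyclic N] (hN : N ≤ center G) (hNG : ∀ c ∈ commutator G, ∀ x : G, ⁅c, x⁆ ∈ N) :
    centralizer (commutator G : Set G) = ⊤ := by
  by_contra hC
  set C := centralizer (commutator G : Set G)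
  set Z := (center G).subgroupOf (commutator G)
  have hindex : C.index ≤ Z.index := index_centralizer_le_relIndex_center hN hNG
  have hcard : Nat.card (commutator C) ≤ Nat.card Z := by
    rw [← card_map_of_injective C.subtype_injective, map_subtype_commutator,
      ← card_map_of_injective (commutator G).subtype_injective, subgroupOf_map_subtype]
    exact card_le_of_le (le_inf (commutator_centralizer_commutator_le_center G)
      (commutator_mono le_top le_top))
  have hC_card : Nat.card C = Nat.card (Abelianization C) * Nat.card (commutator C) :=
    card_eq_card_quotient_mul_card_subgroup _
  have hG_card : Nat.card G = Nat.card (Abelianization G) * Nat.card (commutator G) :=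
    card_eq_card_quotient_mul_card_subgroup _
  have : Nat.card G < Nat.card G := calc
    Nat.card G = C.index * (Nat.card (Abelianization C) * Nat.card (commutator C)) := by
      rw [← hC_card, C.index_mul_card]
    _ ≤ Z.index * (Nat.card (Abelianization C) * Nat.card Z) := by gcongr
    _ = Nat.card (commutator G) * Nat.card (Abelianization C) := by
      rw [← Z.index_mul_card]; ring
    _ < Nat.card (commutator G) * Nat.card (Abelianization G) :=
      Nat.mul_lt_mul_of_pos_left (hG C hC) Nat.card_pos
    _ = Nat.card G := by rw [hG_card, mul_comm]
  exact lt_irrefl _ this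

theorem commutator_le_center (hG : IsAbelianizationCritical G) :
    commutator G ≤ center G := by
  induction hn : Nat.card G using Nat.strong_induction_on generalizing G with
  | _ n ih =>
  by_cases hbot : commutator G = ⊥
  · exact hbot ▸ bot_le
  have := hG.isNilpotent
  obtain ⟨⟨w, hw_comm, hw_center⟩, hw⟩ :=
    (commutator G ⊓ center G).ne_bot_iff_exists_ne_one.mp
      (Group.IsNilpotent.commutator_inf_center_ne_bot hbot)
  set N := zpowers (w : G)
  have hN_center : N ≤ center G := zpowers_le.mpr hw_center
  have : N.Normal := normal_of_le_center hN_center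
  have hN_card : 1 < Nat.card N :=
    (one_lt_card_iff_ne_bot N).mpr (zpowers_ne_bot.mpr fun h => hw (Subtype.ext h))
  have hN_lt : Nat.card (G ⧸ N) < n := by
    rw [← hn, card_eq_card_quotient_mul_card_subgroup N]
    exact lt_mul_of_one_lt_right Nat.card_pos hN_card
  have hquot := ih _ hN_lt (hG.quotient N (zpowers_le.mpr hw_comm)) rfl
  have hC := hG.centralizer_commutator_eq_top hN_center
    fun c hc x => commutatorElement_mem_of_commutator_quotient_le_center hquot hc x
  exact fun c hc => mem_center_iff.mpr fun g =>
    (mem_centralizer_iff.mp (hC ▸ mem_top g) c hc).symm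

end IsAbelianizationCritical

/-- **Lemma.**
Let `G` be a finite group and `H ≤ G` a subgroup of minimal order among all subgroups
`K ≤ G` for which the order of the abelianization `K/[K,K]` is maximal.
Then `H` is nilpotent of class at most 2, i.e. its commutator subgroup is contained in
its center. -/
theorem stmt_7 (G : Type) [Group G] [Fintype G] (H : Subgroup G)
    (hmax : ∀ K : Subgroup G, Nat.card (Abelianization K) ≤ Nat.card (Abelianization H))
    (hmin : ∀ K : Subgroup G,
      Nat.card (Abelianization H) ≤ Nat.card (Abelianization K) →
      Nat.card H ≤ Nat.card K) :
    commutator H ≤ Subgroup.center H := by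
  refine IsAbelianizationCritical.commutator_le_center fun K hK => ?_
  set K' := K.map H.subtype
  have hK'_card : Nat.card K' = Nat.card K := card_map_of_injective H.subtype_injective
  have hK'_ab : Nat.card (Abelianization K') = Nat.card (Abelianization K) :=
    Nat.card_congr (equivMapOfInjective K _ H.subtype_injective).abelianizationCongr.symm.toEquiv
  refine lt_of_le_of_ne (hK'_ab ▸ hmax K') fun h => hK (eq_top_of_le_card K ?_)
  exact hK'_card ▸ hmin K' (hK'_ab ▸ h.ge)
end

section
/- Let G be a finite group and H ≤ G a subgroup. Then the number of conjugacy classes of G is at least the number of conjugacy classes of H divided by the index [G:H]; that is, k(G) ≥ k(H)/[G:H]. -/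
/-!
Both `k(H) * |H|` and `k(G) * |G|` count commuting pairs, and every commuting pair of `H` is one
of `G`. Hence `k(H) * |H| ≤ k(G) * |G| = k(G) * [G:H] * |H|`.
-/

namespace Subgroup

variable {G : Type*} [Group G]

lemma card_commute_le_card_commute [Finite G] (H : Subgroup G) :
    Nat.card {p : H × H // Commute p.1 p.2} ≤ Nat.card {p : G × G // Commute p.1 p.2} :=
  Nat.card_le_card_of_injective (fun p ↦ ⟨(p.1.1, p.1.2), Subtype.ext_iff.mp p.2⟩)
    fun p q h ↦ by simpa only [Subtype.ext_iff, Prod.ext_iff] using h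

lemma card_conjClasses_le_card_conjClasses_mul_index [Finite G] (H : Subgroup G) :
    Nat.card (ConjClasses H) ≤ Nat.card (ConjClasses G) * H.index := by
  have hpairs := H.card_commute_le_card_commute
  rw [card_comm_eq_card_conjClasses_mul_card, card_comm_eq_card_conjClasses_mul_card,
    ← H.card_mul_index, ← mul_assoc, mul_right_comm] at hpairs
  exact Nat.le_of_mul_le_mul_right hpairs Finite.card_pos

end Subgroup

/-- **Lemma (conjugacy classes of subgroups).**
Let `G` be a finite group and `H ≤ G` a subgroup. Then the number of conjugacy classes
of `G` is at least the number of conjugacy classes of `H` divided by the index `[G:H]`: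
`k(G) ≥ k(H)/[G:H]`. -/
theorem stmt_10 (G : Type) [Group G] [Fintype G] (H : Subgroup G) :
    (Nat.card (ConjClasses H) : ℝ) / (H.index : ℝ) ≤ (Nat.card (ConjClasses G) : ℝ) := by
  have hindex : (0 : ℝ) < H.index := by exact_mod_cast Nat.pos_of_ne_zero H.index_ne_zero_of_finite
  rw [div_le_iff₀ hindex]
  exact_mod_cast H.card_conjClasses_le_card_conjClasses_mul_index
end

section
/- There exists a constant C > 0 such that for every integer n ≥ 2, the wreath product G_n = C₂ ≀ C_n (the semidirect product (C₂)ⁿ ⋊ C_n where C_n acts by cyclically permuting the n coordinates) admits a generating set S of size 2 with diam(G_n, S) ≤ C·n. -/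
open scoped ENNReal

/-- The base group `(C₂)ⁿ` of the wreath product `C₂ ≀ Cₙ`, written multiplicatively and
indexed by `ZMod n`. -/
abbrev WreathBase (n : ℕ) : Type := ZMod n → Multiplicative (ZMod 2)

/-- The automorphism of `(C₂)ⁿ` cyclically shifting the coordinates by `z`. -/
def wreathShift (n : ℕ) (z : ZMod n) : WreathBase n ≃* WreathBase n where
  toFun f := fun i => f (i + z)
  invFun f := fun i => f (i - z)
  left_inv f := funext fun i => by simp
  right_inv f := funext fun i => by simp
  map_mul' f g := rfl

/-- The action of `Cₙ` on `(C₂)ⁿ` by cyclic permutation of the coordinates. -/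
def wreathAction (n : ℕ) : Multiplicative (ZMod n) →* MulAut (WreathBase n) where
  toFun z := wreathShift n z.toAdd
  map_one' := by
    ext f i
    simp [wreathShift]
  map_mul' z w := by
    ext f i
    simp [wreathShift, add_assoc]

/-- The wreath product `C₂ ≀ Cₙ = (C₂)ⁿ ⋊ Cₙ`, where `Cₙ` acts by cyclically permuting
the `n` coordinates. -/
abbrev Wreath (n : ℕ) : Type :=
  SemidirectProduct (WreathBase n) (Multiplicative (ZMod n)) (wreathAction n)


/-! Let `t = (1, τ)` and `s = (δ₀, τ)`, where `τ` generates `Cₙ` and `δ₀` is the lamp at `0`.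
Every letter of a word in `t, s` advances the cursor by one and possibly toggles the lamp under
it, so a word of length `n` visits each coordinate exactly once and returns the cursor home: any
`f ∈ (C₂)ⁿ` is such a word. Then `(f, z) = (f, 1) · tᵏ` with `k < n`, a word of length `< 2n`. -/

theorem SemidirectProduct.list_prod_map_range_mk {N G : Type*} [CommGroup N] [Group G]
    {φ : G →* MulAut N} (c : ℕ → N) (g : G) (m : ℕ) :
    ((List.range m).map fun i => (⟨c i, g⟩ : N ⋊[φ] G)).prod =
      ⟨∏ i ∈ Finset.range m, φ (g ^ i) (c i), g ^ m⟩ := by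
  induction m with
  | zero => ext <;> simp
  | succ m ih =>
    rw [List.range_succ, List.map_append, List.prod_append, ih, List.map_singleton,
      List.prod_singleton]
    ext
    · simp only [SemidirectProduct.mul_left, Finset.prod_range_succ]
    · exact (pow_succ g m).symm

section GeneratesWithin

variable {G : Type*} [Group G]

def GeneratesWithin (S : Finset G) (n : ℕ) : Prop :=
  ∀ g : G, ∃ l : List G, l.length ≤ n ∧ (∀ x ∈ l, x ∈ S) ∧ l.prod = g

theorem GeneratesWithin.groupDiam_le {S : Finset G} {n : ℕ} (h : GeneratesWithin S n) :
    groupDiam G S ≤ n :=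
  sInf_le ⟨n, rfl, h⟩

theorem GeneratesWithin.closure_eq_top {S : Finset G} {n : ℕ} (h : GeneratesWithin S n) :
    Subgroup.closure (S : Set G) = ⊤ := by
  refine eq_top_iff.2 fun g _ => ?_
  obtain ⟨l, -, hl, rfl⟩ := h g
  exact list_prod_mem fun x hx => Subgroup.subset_closure (hl x hx)

end GeneratesWithin

@[simp]
theorem wreathAction_apply {n : ℕ} (z : Multiplicative (ZMod n)) (c : WreathBase n) (j : ZMod n) :
    wreathAction n z c j = c (j + z.toAdd) := rfl

namespace Wreath

open SemidirectProduct

variable {n : ℕ}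

def rot (n : ℕ) : Wreath n := inr (.ofAdd 1)

def toggleRot (n : ℕ) : Wreath n := ⟨Pi.mulSingle 0 (.ofAdd 1), .ofAdd 1⟩

open Classical in
noncomputable def gens (n : ℕ) : Finset (Wreath n) := {rot n, toggleRot n}

theorem rot_ne_toggleRot : rot n ≠ toggleRot n := fun h => by
  have h0 := congrFun (congrArg SemidirectProduct.left h) 0
  simp only [rot, toggleRot, left_inr, Pi.one_apply, Pi.mulSingle_eq_same] at h0
  exact absurd h0 (by decide : (1 : Multiplicative (ZMod 2)) ≠ .ofAdd 1)

open Classical in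
theorem card_gens : (gens n).card = 2 :=
  Finset.card_pair rot_ne_toggleRot

open Classical in
theorem rot_mem_gens : rot n ∈ gens n :=
  Finset.mem_insert_self _ _

open Classical in
theorem toggleRot_mem_gens : toggleRot n ∈ gens n :=
  Finset.mem_insert_of_mem (Finset.mem_singleton_self _)

theorem mk_mulSingle_zero_mem_gens (b : Multiplicative (ZMod 2)) :
    (⟨Pi.mulSingle 0 b, .ofAdd 1⟩ : Wreath n) ∈ gens n := by
  obtain rfl | rfl : b = 1 ∨ b = .ofAdd 1 := by revert b; decide
  · rw [Pi.mulSingle_one]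
    exact rot_mem_gens
  · exact toggleRot_mem_gens

theorem rot_pow_val [NeZero n] (z : Multiplicative (ZMod n)) :
    rot n ^ z.toAdd.val = inr z := by
  rw [rot, ← map_pow, ← ofAdd_nsmul, nsmul_one, ZMod.natCast_zmod_val, ofAdd_toAdd]

/-- The `i`-th letter is preceded by `i` rotations, so its lamp `0` lands on coordinate `-i`. -/
def toggleWord (f : WreathBase n) : List (Wreath n) :=
  (List.range n).map fun i : ℕ => ⟨Pi.mulSingle 0 (f (-(i : ZMod n))), .ofAdd 1⟩

theorem length_toggleWord (f : WreathBase n) : (toggleWord f).length = n := by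
  simp [toggleWord]

theorem mem_gens_of_mem_toggleWord {f : WreathBase n} {x : Wreath n} (hx : x ∈ toggleWord f) :
    x ∈ gens n := by
  obtain ⟨i, -, rfl⟩ := List.mem_map.1 hx
  exact mk_mulSingle_zero_mem_gens _

theorem prod_toggleWord [NeZero n] (f : WreathBase n) : (toggleWord f).prod = inl f := by
  rw [toggleWord, list_prod_map_range_mk]
  refine SemidirectProduct.ext (funext fun j => ?_) ?_
  · dsimp only
    rw [left_inl, Finset.prod_apply]
    simp only [wreathAction_apply, toAdd_pow, toAdd_ofAdd, nsmul_eq_mul, mul_one,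
      Pi.mulSingle_apply]
    rw [Finset.prod_eq_single_of_mem (-j).val (Finset.mem_range.2 (ZMod.val_lt _))]
    · simp
    · intro i hi hne
      rw [if_neg]
      contrapose! hne
      rw [← eq_neg_of_add_eq_zero_right hne, ZMod.val_natCast_of_lt (Finset.mem_range.1 hi)]
  · simp [← ofAdd_nsmul]

theorem generatesWithin_gens [NeZero n] : GeneratesWithin (gens n) (2 * n) := by
  intro g
  refine ⟨toggleWord g.left ++ List.replicate g.right.toAdd.val (rot n), ?_, ?_, ?_⟩
  · rw [List.length_append, length_toggleWord, List.length_replicate]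
    have := ZMod.val_lt g.right.toAdd
    omega
  · intro x hx
    rcases List.mem_append.1 hx with hx | hx
    · exact mem_gens_of_mem_toggleWord hx
    · rw [List.eq_of_mem_replicate hx]
      exact rot_mem_gens
  · rw [List.prod_append, prod_toggleWord, List.prod_replicate, rot_pow_val,
      inl_left_mul_inr_right]

end Wreath

/-- There is a constant `C > 0` such that for every `n ≥ 2` the wreath product
`C₂ ≀ Cₙ` admits a generating set `S` of size `2` with `diam(C₂ ≀ Cₙ, S) ≤ C·n`. -/
theorem stmt_13 :
    ∃ C : ℝ, 0 < C ∧ ∀ n : ℕ, 2 ≤ n →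
      ∃ S : Finset (Wreath n), S.card = 2 ∧
        Subgroup.closure (S : Set (Wreath n)) = ⊤ ∧
        (groupDiam (Wreath n) S : ℝ≥0∞) ≤ ENNReal.ofReal (C * n) := by
  refine ⟨2, two_pos, fun n hn => ?_⟩
  have : NeZero n := ⟨by omega⟩
  have hgen := Wreath.generatesWithin_gens (n := n)
  refine ⟨Wreath.gens n, Wreath.card_gens, hgen.closure_eq_top, ?_⟩
  calc (groupDiam (Wreath n) (Wreath.gens n) : ℝ≥0∞)
      ≤ ((2 * n : ℕ) : ℝ≥0∞) := by exact_mod_cast hgen.groupDiam_le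
    _ = ENNReal.ofReal (2 * n) := by
      rw [← ENNReal.ofReal_natCast]
      push_cast
      rfl
end
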